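/- arXiv:2402.10577 — 5 statements merged into one kernel-verified Lean document; each statement's English description precedes it below -/
import Mathlib

section
/- Let p : [x₀,∞) → ℂ be locally absolutely continuous with |arg p(x)| ≤ π/2 − κ/2 and |p(x)| ≥ 1, and suppose |q'(x)/q(x)^{3/2}| < 4δ sin(κ/2), where q = p², 0 < δ < 1 and 0 < κ < π. Then ρ(x) := Re p(x) − (1/2)|p'(x)/p(x)| satisfies ρ(x) ≥ (1−δ) sin(κ/2) · |p(x)| ≥ (1−δ) sin(κ/2) > 0 for all x ≥ x₀. -/
open Real

/-- Let `q = p²` with the branch of `p = √q` chosen so that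
`|arg p| ≤ π/2 − κ/2`, `|p| ≥ 1`, and suppose `|q'/q^{3/2}| < 4δ sin(κ/2)` with
`0 < δ < 1`, `0 < κ < π`. Then
`ρ(x) = Re p(x) − (1/2)|p'(x)/p(x)|` satisfies
`ρ(x) ≥ (1−δ) sin(κ/2) |p(x)| ≥ (1−δ) sin(κ/2) > 0` for all `x ≥ x₀`. -/
theorem rho_lower_bound
    (x₀ δ κ : ℝ) (hδ : 0 < δ) (hδ1 : δ < 1) (hκ : 0 < κ) (hκπ : κ < Real.pi)
    (p p' q q' : ℝ → ℂ)
    (hq : ∀ x, x₀ ≤ x → q x = p x ^ 2)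
    (hq' : ∀ x, x₀ ≤ x → q' x = 2 * p x * p' x)
    (hp : ∀ x, x₀ ≤ x → HasDerivAt p (p' x) x)
    (harg : ∀ x, x₀ ≤ x → |(p x).arg| ≤ Real.pi / 2 - κ / 2)
    (hp1 : ∀ x, x₀ ≤ x → 1 ≤ ‖p x‖)
    (hbound : ∀ x, x₀ ≤ x → ‖q' x‖ / ‖q x‖ ^ ((3 : ℝ) / 2) < 4 * δ * Real.sin (κ / 2)) :
    (∀ x, x₀ ≤ x →
        (1 - δ) * Real.sin (κ / 2) * ‖p x‖ ≤ (p x).re - (1 / 2) * ‖p' x / p x‖ ∧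
        (1 - δ) * Real.sin (κ / 2) ≤ (1 - δ) * Real.sin (κ / 2) * ‖p x‖) ∧
      0 < (1 - δ) * Real.sin (κ / 2) := by
  have hs : 0 < Real.sin (κ / 2) := Real.sin_pos_of_pos_of_lt_pi (by linarith)
    (by linarith [Real.pi_pos])
  refine ⟨fun x hx => ?_, by nlinarith⟩
  set a := ‖p x‖ with ha
  have ha1 : 1 ≤ a := hp1 x hx
  have ha0 : 0 < a := lt_of_lt_of_le one_pos ha1
  have hpne : p x ≠ 0 := by
    intro h
    have := hp1 x hx
    rw [h, norm_zero] at this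
    linarith
  -- norms
  have hqn : ‖q x‖ = a ^ 2 := by rw [hq x hx, norm_pow]
  have hq'n : ‖q' x‖ = 2 * a * ‖p' x‖ := by
    have h2 : ‖(2:ℂ)‖ = 2 := by norm_num
    rw [hq' x hx, norm_mul, norm_mul, h2, ha]
  have hrpow : (a ^ 2 : ℝ) ^ ((3 : ℝ) / 2) = a ^ 3 := by
    rw [← Real.rpow_natCast a 2, ← Real.rpow_mul ha0.le]
    norm_num
  have hb := hbound x hx
  rw [hq'n, hqn, hrpow] at hb
  -- derive ‖p' x‖ < 2 δ s a²
  have hkey : ‖p' x‖ < 2 * δ * Real.sin (κ / 2) * a ^ 2 := by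
    have h3 : (0 : ℝ) < a ^ 3 := by positivity
    rw [div_lt_iff₀ h3] at hb
    nlinarith [norm_nonneg (p' x)]
  have hdiv : ‖p' x / p x‖ = ‖p' x‖ / a := by rw [norm_div]
  -- Re p ≥ a sin(κ/2)
  have hre : Real.sin (κ / 2) * a ≤ (p x).re := by
    have hcos : Real.cos |(p x).arg| ≤ Real.cos (p x).arg := by
      rw [Real.cos_abs]
    have hc : Real.sin (κ / 2) ≤ Real.cos (p x).arg := by
      have := Real.cos_le_cos_of_nonneg_of_le_pi (abs_nonneg (p x).arg)
        (by linarith [Real.pi_pos] : Real.pi / 2 - κ / 2 ≤ Real.pi) (harg x hx)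
      rw [Real.cos_pi_div_two_sub] at this
      linarith
    have habs : ‖p x‖ ≠ 0 := by simpa using hpne
    have : (p x).re = a * Real.cos (p x).arg := by
      rw [Complex.cos_arg hpne, ha]
      field_simp
    rw [this]
    nlinarith
  constructor
  · have h2 : (1 / 2) * ‖p' x / p x‖ ≤ δ * Real.sin (κ / 2) * a := by
      rw [hdiv]
      have h3 : ‖p' x‖ / a ≤ 2 * δ * Real.sin (κ / 2) * a := by
        rw [div_le_iff₀ ha0]; nlinarith
      linarith
    nlinarith
  · nlinarith [mul_nonneg (mul_nonneg (by linarith : (0:ℝ) ≤ 1 - δ) hs.le)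
      (by linarith : (0:ℝ) ≤ a - 1)]
end

section
/- For z, w ∈ ℂ with |arg z| ≤ π/2 − κ/2 and |w| ≤ δ sin(κ/2)·|z| where 0 < δ < 1 and 0 < κ < π, there exists ε with 0 < ε ≤ κ/2 and sin(κ/2 − ε) ≤ δ sin(κ/2) such that |arg(z + w)| ≤ π/2 − ε. -/
/-!
Write `z + w = z (1 + v)` with `‖v‖ ≤ r := δ sin (κ/2) < 1`. Every point of the disc of radius `r`
about `1` has argument at most `arcsin r` in absolute value, and since both `arg z` and
`arg (1 + v)` lie in `[-π/2, π/2]` the arguments add. So `ε := κ/2 - arcsin r` works.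
-/

open Real

namespace Complex

theorem abs_im_le_norm_mul_norm_one_add (v : ℂ) : |v.im| ≤ ‖v‖ * ‖1 + v‖ := by
  refine abs_le_of_sq_le_sq ?_ (by positivity)
  have key : (‖v‖ * ‖1 + v‖) ^ 2 - v.im ^ 2 = (v.re ^ 2 + v.im ^ 2 + v.re) ^ 2 := by
    rw [mul_pow, Complex.sq_norm, Complex.sq_norm, normSq_apply, normSq_apply]
    simp only [add_re, add_im, one_re, one_im]
    ring
  nlinarith [sq_nonneg (v.re ^ 2 + v.im ^ 2 + v.re)]

theorem abs_arg_one_add_le_arcsin {v : ℂ} (hv : ‖v‖ < 1) : |arg (1 + v)| ≤ arcsin ‖v‖ := by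
  have hre : 0 < (1 + v).re := by
    simp only [add_re, one_re]
    linarith [neg_le_of_abs_le (abs_re_le_norm v)]
  have hne : 1 + v ≠ 0 := fun h => by simp [h] at hre
  have harg : |arg (1 + v)| < π / 2 := abs_arg_lt_pi_div_two_iff.2 (Or.inl hre)
  rw [le_arcsin_iff_sin_le ⟨by linarith [abs_nonneg (arg (1 + v))], harg.le⟩
    ⟨by linarith [norm_nonneg v], hv.le⟩, ← abs_sin_eq_sin_abs_of_abs_le_pi (by linarith [pi_pos]),
    sin_arg, abs_div, abs_norm, div_le_iff₀ (norm_pos_iff.2 hne)]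
  simpa using abs_im_le_norm_mul_norm_one_add v

theorem abs_arg_add_le_abs_arg_add_arcsin {z w : ℂ} {r : ℝ} (hz : |arg z| ≤ π / 2)
    (hr0 : 0 ≤ r) (hr1 : r < 1) (hw : ‖w‖ ≤ r * ‖z‖) :
    |arg (z + w)| ≤ |arg z| + arcsin r := by
  rcases eq_or_ne z 0 with rfl | hz0
  · have hw0 : w = 0 := norm_le_zero_iff.1 (by simpa using hw)
    simpa [hw0] using arcsin_nonneg.2 hr0
  set v := w / z
  have hv : ‖v‖ ≤ r := by
    rw [norm_div, div_le_iff₀ (norm_pos_iff.2 hz0)]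
    exact hw
  have harg_le := abs_arg_one_add_le_arcsin (hv.trans_lt hr1)
  have hne : 1 + v ≠ 0 := fun h => by
    simpa [eq_neg_of_add_eq_zero_right h] using hv.trans_lt hr1
  have harg_lt : |arg (1 + v)| < π / 2 := harg_le.trans_lt (arcsin_lt_pi_div_two.2 (hv.trans_lt hr1))
  have hsum : arg z + arg (1 + v) ∈ Set.Ioc (-π) π := by
    constructor <;> cases abs_le.1 hz <;> cases abs_lt.1 harg_lt <;> linarith
  have hzw : z + w = z * (1 + v) := by rw [mul_add, mul_one, mul_div_cancel₀ _ hz0]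
  calc |arg (z + w)| = |arg z + arg (1 + v)| := by rw [hzw, arg_mul hz0 hne hsum]
    _ ≤ |arg z| + |arg (1 + v)| := abs_add_le _ _
    _ ≤ |arg z| + arcsin r := by gcongr; exact harg_le.trans (arcsin_le_arcsin hv)

end Complex

/-- For `z, w ∈ ℂ` with `|arg z| ≤ π/2 − κ/2` and
`|w| ≤ δ sin(κ/2) |z|` where `0 < δ < 1` and `0 < κ < π`, there exists `ε` with
`0 < ε ≤ κ/2` and `sin(κ/2 − ε) ≤ δ sin(κ/2)` such that
`|arg (z + w)| ≤ π/2 − ε`. -/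
theorem arg_add_perturbation_in_subsector
    (δ κ : ℝ) (hδ : 0 < δ) (hδ1 : δ < 1) (hκ : 0 < κ) (hκπ : κ < Real.pi)
    (z w : ℂ)
    (hz : |z.arg| ≤ Real.pi / 2 - κ / 2)
    (hw : ‖w‖ ≤ δ * Real.sin (κ / 2) * ‖z‖) :
    ∃ ε : ℝ, 0 < ε ∧ ε ≤ κ / 2 ∧ Real.sin (κ / 2 - ε) ≤ δ * Real.sin (κ / 2) ∧
      |(z + w).arg| ≤ Real.pi / 2 - ε := by
  set s := sin (κ / 2)
  have hs : 0 < s := sin_pos_of_pos_of_lt_pi (by linarith) (by linarith)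
  have hδs : δ * s < s := mul_lt_of_lt_one_left hs hδ1
  have hδs0 : 0 ≤ δ * s := by positivity
  have hδs1 : δ * s < 1 := hδs.trans_le (sin_le_one _)
  have harcsin : arcsin (δ * s) < κ / 2 :=
    calc arcsin (δ * s) < arcsin s := arcsin_lt_arcsin (by linarith) hδs (sin_le_one _)
      _ = κ / 2 := arcsin_sin (by linarith) (by linarith)
  refine ⟨κ / 2 - arcsin (δ * s), by linarith, by linarith [arcsin_nonneg.2 hδs0], ?_, ?_⟩
  · rw [sub_sub_cancel, sin_arcsin (by linarith) hδs1.le]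
  · have := Complex.abs_arg_add_le_abs_arg_add_arcsin (hz.trans (by linarith)) hδs0 hδs1 hw
    linarith
end

section
/- Let L₀ be the self-adjoint operator −y'' on L²[0,π] with Dirichlet boundary conditions y(0) = y(π) = 0, let u ≥ 0, and let B_n be the multiplication operators by r_n (as above). Suppose λ_n are eigenvalues of L_n = L₀ + iuB_n with λ_n → λ₀ and λ₀ is not an eigenvalue of L₀. Then a contradiction arises: no such convergent sequence of eigenvalues with normalized eigenfunctions can exist; equivalently, every limit point of eigenvalues of L_n lying in a compact set must be an eigenvalue j² of L₀. -/
open Filter Topology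
open scoped InnerProductSpace

/-- Let `L₀` be a symmetric operator (modelling `−y''` on `L²[0,π]`
with Dirichlet conditions) whose resolvent `(L₀ − λ₀)⁻¹` at a point `λ₀` that is not
an eigenvalue of `L₀` exists and is compact, let `u ≥ 0` and `B n` be operators with
`‖B n‖ ≤ 1` converging weakly to `0` (multiplication by the Rademacher functions
`r n`). If `λ n` are eigenvalues of `L n = L₀ + i u B n` with normalized
eigenfunctions `f n` and `λ n → λ₀`, then a contradiction arises: no such sequence
can exist, i.e. every such limit point must be an eigenvalue of `L₀`. -/
theorem no_spurious_limit_eigenvalue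
    {H : Type*} [NormedAddCommGroup H] [InnerProductSpace ℂ H] [CompleteSpace H]
    (L₀ : H →ₗ.[ℂ] H)
    (hsym : ∀ x y : L₀.domain, ⟪L₀ x, (y : H)⟫_ℂ = ⟪(x : H), L₀ y⟫_ℂ)
    (u : ℝ) (hu : 0 ≤ u)
    (B : ℕ → H →L[ℂ] H)
    (hBnorm : ∀ n, ‖B n‖ ≤ 1)
    (hBweak : ∀ f g : H, Tendsto (fun n => ⟪B n f, g⟫_ℂ) atTop (𝓝 0))
    (lam : ℕ → ℂ) (lam₀ : ℂ)
    (hlim : Tendsto lam atTop (𝓝 lam₀))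
    (f : ℕ → L₀.domain) (hnorm : ∀ n, ‖(f n : H)‖ = 1)
    (heig : ∀ n, L₀ (f n) + (Complex.I * (u : ℂ)) • B n (f n : H) = lam n • ((f n : H)))
    -- `λ₀` is not an eigenvalue of `L₀`
    (hnoteig : ¬ ∃ g : L₀.domain, (g : H) ≠ 0 ∧ L₀ g = lam₀ • (g : H))
    -- `(L₀ − λ₀)⁻¹` exists and is compact
    (hres : ∃ R : H →L[ℂ] H, IsCompactOperator R ∧
      (∀ x : L₀.domain, R (L₀ x - lam₀ • (x : H)) = (x : H)) ∧
      (∀ y : H, ∃ hx : R y ∈ L₀.domain, L₀ ⟨R y, hx⟩ - lam₀ • R y = y)) :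
    False := by
  obtain ⟨R, hRc, hR1, -⟩ := hres
  -- the argument of `R` in the key identity
  set w : ℕ → H := fun n =>
    (lam n - lam₀) • (f n : H) - (Complex.I * (u : ℂ)) • B n (f n : H) with hw
  have key : ∀ n, (f n : H) = R (w n) := by
    intro n
    have h := hR1 (f n)
    have h2 : L₀ (f n) - lam₀ • (f n : H) = w n := by
      have h3 := heig n
      have h4 : L₀ (f n) = lam n • ((f n : H)) - (Complex.I * (u : ℂ)) • B n (f n : H) :=
        eq_sub_of_add_eq h3
      rw [hw]
      simp only [h4, sub_smul]
      abel
    rw [← h2, h]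
  -- bound `lam`
  have hbdd : BddAbove (Set.range fun n => ‖lam n‖) :=
    (hlim.norm).bddAbove_range
  obtain ⟨M, hM⟩ := hbdd
  have hMn : ∀ n, ‖lam n‖ ≤ M := fun n => hM (Set.mem_range_self n)
  set C : ℝ := M + ‖lam₀‖ + u with hC
  have hwC : ∀ n, w n ∈ Metric.closedBall (0 : H) C := by
    intro n
    rw [Metric.mem_closedBall, dist_zero_right, hw]
    calc ‖(lam n - lam₀) • (f n : H) - (Complex.I * (u : ℂ)) • B n (f n : H)‖
        ≤ ‖(lam n - lam₀) • (f n : H)‖ + ‖(Complex.I * (u : ℂ)) • B n (f n : H)‖ :=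
          norm_sub_le _ _
      _ ≤ (‖lam n‖ + ‖lam₀‖) * 1 + (1 * u) * (1 * 1) := by
          gcongr
          · rw [norm_smul]
            gcongr
            · exact (norm_sub_le _ _)
            · exact le_of_eq (hnorm n)
          · rw [norm_smul, norm_mul, Complex.norm_I, Complex.norm_real,
              Real.norm_of_nonneg hu]
            gcongr
            calc ‖B n (f n : H)‖ ≤ ‖B n‖ * ‖(f n : H)‖ := (B n).le_opNorm _
              _ ≤ 1 * 1 := by gcongr; exacts [hBnorm n, le_of_eq (hnorm n)]
      _ ≤ C := by rw [hC]; nlinarith [hMn n]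
  -- compactness: extract a convergent subsequence of `f`
  obtain ⟨K, hK, hKsub⟩ :=
    IsCompactOperator.image_closedBall_subset_compact (f := (R : H →ₗ[ℂ] H)) hRc C
  have hfK : ∀ n, (f n : H) ∈ K := by
    intro n
    rw [key n]
    exact hKsub ⟨w n, hwC n, rfl⟩
  obtain ⟨a, -, φ, hφ, ha⟩ := hK.tendsto_subseq hfK
  -- the limit has norm 1
  have hanorm : ‖a‖ = 1 := by
    have h1 : Tendsto (fun k => ‖(f (φ k) : H)‖) atTop (𝓝 ‖a‖) := ha.norm
    have h2 : Tendsto (fun k => ‖(f (φ k) : H)‖) atTop (𝓝 1) := by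
      simp only [hnorm]; exact tendsto_const_nhds
    exact tendsto_nhds_unique h1 h2
  -- inner products tend to `⟪a, a⟫`
  have h1 : Tendsto (fun k => ⟪(f (φ k) : H), a⟫_ℂ) atTop (𝓝 ⟪a, a⟫_ℂ) :=
    ha.inner tendsto_const_nhds
  -- ... and to `0`
  set g : H := (ContinuousLinearMap.adjoint R) a with hg
  have hsplit : ∀ k, ⟪(f (φ k) : H), a⟫_ℂ =
      (starRingEnd ℂ) (lam (φ k) - lam₀) * ⟪R (f (φ k) : H), a⟫_ℂ -
      (starRingEnd ℂ) (Complex.I * (u : ℂ)) *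
        (⟪B (φ k) ((f (φ k) : H) - a), g⟫_ℂ + ⟪B (φ k) a, g⟫_ℂ) := by
    intro k
    have e1 : ⟪B (φ k) ((f (φ k) : H) - a), g⟫_ℂ + ⟪B (φ k) a, g⟫_ℂ
        = ⟪B (φ k) (f (φ k) : H), g⟫_ℂ := by
      rw [map_sub, inner_sub_left]; ring
    rw [e1, hg, ContinuousLinearMap.adjoint_inner_right]
    conv_lhs => rw [key (φ k)]
    rw [hw]
    simp only [map_sub, map_smul, inner_sub_left, inner_smul_left]
  have ht1 : Tendsto (fun k => (starRingEnd ℂ) (lam (φ k) - lam₀) *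
      ⟪R (f (φ k) : H), a⟫_ℂ) atTop (𝓝 (0 * ⟪R a, a⟫_ℂ)) := by
    refine Tendsto.mul ?_ ((R.continuous.tendsto a |>.comp ha).inner tendsto_const_nhds)
    have : Tendsto (fun k => lam (φ k) - lam₀) atTop (𝓝 (lam₀ - lam₀)) :=
      ((hlim.comp (hφ.tendsto_atTop)).sub tendsto_const_nhds)
    rw [sub_self] at this
    simpa only [Function.comp_def, map_zero] using
      (Complex.continuous_conj.tendsto 0).comp this
  have ht2 : Tendsto (fun k => ⟪B (φ k) ((f (φ k) : H) - a), g⟫_ℂ) atTop (𝓝 0) := by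
    have htend : Tendsto (fun k => ‖(f (φ k) : H) - a‖ * ‖g‖) atTop (𝓝 0) := by
      have h5 : Tendsto (fun k => (f (φ k) : H) - a) atTop (𝓝 (a - a)) :=
        ha.sub tendsto_const_nhds
      rw [sub_self] at h5
      simpa using h5.norm.mul_const ‖g‖
    refine squeeze_zero_norm (fun k => ?_) htend
    calc ‖⟪B (φ k) ((f (φ k) : H) - a), g⟫_ℂ‖
          ≤ ‖B (φ k) ((f (φ k) : H) - a)‖ * ‖g‖ := norm_inner_le_norm _ _
        _ ≤ (1 * ‖(f (φ k) : H) - a‖) * ‖g‖ := by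
            gcongr
            calc ‖B (φ k) ((f (φ k) : H) - a)‖
                ≤ ‖B (φ k)‖ * ‖(f (φ k) : H) - a‖ := (B (φ k)).le_opNorm _
              _ ≤ 1 * ‖(f (φ k) : H) - a‖ := by gcongr; exact hBnorm (φ k)
        _ = ‖(f (φ k) : H) - a‖ * ‖g‖ := by ring
  have ht3 : Tendsto (fun k => ⟪B (φ k) a, g⟫_ℂ) atTop (𝓝 0) :=
    (hBweak a g).comp hφ.tendsto_atTop
  have h2 : Tendsto (fun k => ⟪(f (φ k) : H), a⟫_ℂ) atTop (𝓝 0) := by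
    have := ht1.sub ((tendsto_const_nhds (x := (starRingEnd ℂ) (Complex.I * (u : ℂ)))).mul
      (ht2.add ht3))
    simp only [zero_mul, add_zero, mul_zero, sub_zero] at this
    simpa only [← hsplit] using this
  have hzero : ⟪a, a⟫_ℂ = 0 := tendsto_nhds_unique h1 h2
  have : a = 0 := inner_self_eq_zero.mp hzero
  rw [this, norm_zero] at hanorm
  exact one_ne_zero hanorm.symm
end

section
/- Let φ₁,…,φ_n be continuous complex-valued functions on [0, d] that are linearly independent on [0, d₁] for every 0 < d₁ ≤ d. Then there exist infinitely many pairwise disjoint open intervals I_l = (α_l, β_l) ⊂ (0, d], with β_{l+1} < α_l, such that φ₁,…,φ_n are linearly independent on each I_l. -/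
open Set

lemma key_lemma (n : ℕ) (d : ℝ) (φ : Fin n → ℝ → ℂ)
    (hcont : ∀ ν, ContinuousOn (φ ν) (Icc 0 d))
    (hind : ∀ d₁ : ℝ, 0 < d₁ → d₁ ≤ d →
      ∀ A : Fin n → ℂ, (∀ x ∈ Icc (0:ℝ) d₁, ∑ ν, A ν * φ ν x = 0) → ∀ ν, A ν = 0)
    (ε : ℝ) (hε0 : 0 < ε) (hεd : ε ≤ d) :
    ∃ α, 0 < α ∧ α < ε ∧
      ∀ A : Fin n → ℂ, (∀ x ∈ Ioo α ε, ∑ ν, A ν * φ ν x = 0) → ∀ ν, A ν = 0 := by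
  set L : ℝ → ((Fin n → ℂ) →ₗ[ℂ] ℂ) := fun x => ∑ ν, φ ν x • (LinearMap.proj ν) with hL
  have hLval : ∀ x (A : Fin n → ℂ), L x A = ∑ ν, A ν * φ ν x := by
    intro x A
    simp [hL, LinearMap.sum_apply, mul_comm]
  set V : ℝ → Submodule ℂ (Fin n → ℂ) := fun a => ⨅ x ∈ Ioo a ε, LinearMap.ker (L x) with hV
  have hVmem : ∀ a (A : Fin n → ℂ), A ∈ V a ↔ ∀ x ∈ Ioo a ε, ∑ ν, A ν * φ ν x = 0 := by
    intro a A
    simp [hV, Submodule.mem_iInf, LinearMap.mem_ker, hLval]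
  have hVanti : ∀ a b : ℝ, a ≤ b → V a ≤ V b := by
    intro a b hab A hA
    rw [hVmem] at hA ⊢
    intro x hx
    exact hA x ⟨lt_of_le_of_lt hab hx.1, hx.2⟩
  set W : ℕ → Submodule ℂ (Fin n → ℂ) := fun k => V (ε / 2 ^ (k + 1)) with hW
  set f : ℕ → ℕ := fun k => Module.finrank ℂ (W k) with hf
  obtain ⟨k₀, hk₀⟩ : ∃ k₀, ∀ k, f k₀ ≤ f k := by
    have hne : (Set.range f).Nonempty := ⟨f 0, 0, rfl⟩
    obtain ⟨k₀, hk₀⟩ := Nat.sInf_mem hne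
    exact ⟨k₀, fun k => hk₀ ▸ Nat.sInf_le ⟨k, rfl⟩⟩
  have hWle : ∀ k, k₀ ≤ k → W k = W k₀ := by
    intro k hk
    have h1 : W k ≤ W k₀ := by
      apply hVanti
      apply div_le_div_of_nonneg_left hε0.le (by positivity)
      exact pow_le_pow_right₀ one_le_two (by omega)
    exact Submodule.eq_of_le_of_finrank_le h1 (hk₀ k)
  refine ⟨ε / 2 ^ (k₀ + 1), by positivity, ?_, ?_⟩
  · exact div_lt_self hε0 (one_lt_pow₀ one_lt_two (Nat.succ_ne_zero _))
  intro A hA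
  have hA0 : A ∈ W k₀ := (hVmem _ A).mpr hA
  have hIoo : ∀ x ∈ Ioo (0:ℝ) ε, ∑ ν, A ν * φ ν x = 0 := by
    intro x hx
    obtain ⟨k', hk'⟩ := pow_unbounded_of_one_lt (ε / x) (one_lt_two (α := ℝ))
    set k := max k' k₀
    have hAk : A ∈ W k := by rw [hWle k (le_max_right _ _)]; exact hA0
    have hlt : ε / 2 ^ (k + 1) < x := by
      have h1 : ε / x < 2 ^ k := lt_of_lt_of_le hk' (pow_le_pow_right₀ one_le_two (le_max_left _ _))
      have h2 : ε / x < 2 ^ (k+1) := lt_of_lt_of_le h1 (pow_le_pow_right₀ one_le_two (by omega))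
      rw [div_lt_iff₀ hx.1] at h2
      rw [div_lt_iff₀ (by positivity)]
      linarith [mul_comm x ((2:ℝ) ^ (k+1))]
    exact (hVmem _ A).mp hAk x ⟨hlt, hx.2⟩
  -- extend to Icc by continuity
  have hg : ContinuousOn (fun x => ∑ ν, A ν * φ ν x) (Icc 0 ε) := by
    apply ContinuousOn.mono _ (Icc_subset_Icc_right hεd)
    exact continuousOn_finset_sum _ fun ν _ => (hcont ν).const_smul (A ν) |>.congr (fun x _ => rfl) |>.mono subset_rfl
  have hIcc : ∀ x ∈ Icc (0:ℝ) ε, ∑ ν, A ν * φ ν x = 0 := by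
    have hclosed : IsClosed (Icc (0:ℝ) ε ∩ (fun x => ∑ ν, A ν * φ ν x) ⁻¹' {0}) :=
      hg.preimage_isClosed_of_isClosed isClosed_Icc isClosed_singleton
    have hsub : Ioo (0:ℝ) ε ⊆ Icc (0:ℝ) ε ∩ (fun x => ∑ ν, A ν * φ ν x) ⁻¹' {0} :=
      fun x hx => ⟨Ioo_subset_Icc_self hx, hIoo x hx⟩
    intro x hx
    have hxcl : x ∈ closure (Ioo (0:ℝ) ε) := by
      rw [closure_Ioo hε0.ne]; exact hx
    exact (closure_minimal hsub hclosed hxcl).2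
  exact hind ε hε0 hεd A hIcc

/-- Let `φ₁, …, φ_n` be continuous complex-valued functions on
`[0, d]`, linearly independent on `[0, d₁]` for every `0 < d₁ ≤ d`. Then there
exist infinitely many pairwise disjoint intervals `I_l = (α_l, β_l) ⊆ (0, d]`,
with `β_{l+1} < α_l`, such that `φ₁, …, φ_n` are linearly independent on each
`I_l`. -/
theorem exists_disjoint_intervals_of_linear_independence
    (n : ℕ) (d : ℝ) (hd : 0 < d) (φ : Fin n → ℝ → ℂ)
    (hcont : ∀ ν, ContinuousOn (φ ν) (Set.Icc 0 d))
    (hind : ∀ d₁ : ℝ, 0 < d₁ → d₁ ≤ d →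
      ∀ A : Fin n → ℂ, (∀ x ∈ Set.Icc (0 : ℝ) d₁, ∑ ν, A ν * φ ν x = 0) → ∀ ν, A ν = 0) :
    ∃ α β : ℕ → ℝ,
      (∀ l, 0 < α l ∧ α l < β l ∧ β l ≤ d) ∧
      (∀ l, β (l + 1) < α l) ∧
      (∀ l, ∀ A : Fin n → ℂ,
        (∀ x ∈ Set.Ioo (α l) (β l), ∑ ν, A ν * φ ν x = 0) → ∀ ν, A ν = 0) := by
  have key := key_lemma n d φ hcont hind
  have key' : ∀ ε : ℝ, ∃ a : ℝ, (0 < ε ∧ ε ≤ d) → (0 < a ∧ a < ε ∧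
      ∀ A : Fin n → ℂ, (∀ x ∈ Set.Ioo a ε, ∑ ν, A ν * φ ν x = 0) → ∀ ν, A ν = 0) := by
    intro ε
    by_cases h : 0 < ε ∧ ε ≤ d
    · obtain ⟨a, h1, h2, h3⟩ := key ε h.1 h.2
      exact ⟨a, fun _ => ⟨h1, h2, h3⟩⟩
    · exact ⟨0, fun h' => absurd h' h⟩
  choose g hg using key'
  set F : ℕ → ℝ × ℝ := fun l => Nat.rec (g d, d) (fun _ p => (g (p.1 / 2), p.1 / 2)) l with hF
  set α : ℕ → ℝ := fun l => (F l).1 with hα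
  set β : ℕ → ℝ := fun l => (F l).2 with hβ
  have hstep : ∀ l, α (l + 1) = g (α l / 2) ∧ β (l + 1) = α l / 2 := fun l => ⟨rfl, rfl⟩
  have hinv : ∀ l, 0 < α l ∧ α l < β l ∧ β l ≤ d ∧
      ∀ A : Fin n → ℂ, (∀ x ∈ Set.Ioo (α l) (β l), ∑ ν, A ν * φ ν x = 0) → ∀ ν, A ν = 0 := by
    intro l
    induction l with
    | zero =>
      have h0 : α 0 = g d ∧ β 0 = d := ⟨rfl, rfl⟩
      obtain ⟨h1, h2, h3⟩ := hg d ⟨hd, le_refl d⟩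
      rw [h0.1, h0.2]
      exact ⟨h1, h2, le_refl d, h3⟩
    | succ l ih =>
      obtain ⟨ih1, ih2, ih3, _⟩ := ih
      have hε : 0 < α l / 2 ∧ α l / 2 ≤ d := ⟨by linarith, by linarith⟩
      obtain ⟨h1, h2, h3⟩ := hg (α l / 2) hε
      rw [(hstep l).1, (hstep l).2]
      exact ⟨h1, h2, by linarith, h3⟩
  refine ⟨α, β, fun l => ⟨(hinv l).1, (hinv l).2.1, (hinv l).2.2.1⟩, ?_, fun l => (hinv l).2.2.2⟩
  intro l
  rw [(hstep l).2]
  linarith [(hinv l).1]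
end

section
/- Let φ₁,…,φ_n and W₁,…,W_n be continuous complex-valued functions on [0,d] such that W_n(0) = 1 and for every 0 < d₁ ≤ d the system φ₁,…,φ_n is linearly independent on [0, d₁]. Then the Volterra-type operator R on L²[0,d] defined by (Rg)(x) = Σ_{ν=1}^n φ_ν(x) ∫₀ˣ W_ν(ξ) g(ξ) dξ has infinite-dimensional range. -/
/-!
Inside every `[0, e]` there is a closed interval `[a, b] ⊂ (0, e)` on which the `φ_ν` are still
linearly independent: the spaces of coefficient vectors annihilating `∑ A_ν φ_ν` on `[a, e/2]`
decrease as `a ↓ 0`, so they stabilise by finite dimensionality, and the stable space annihilates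
`∑ A_ν φ_ν` on `(0, e/2]`, hence on `[0, e/2]` by continuity, hence is zero.
Iterating gives intervals `J_l = [a_l, b_l]` accumulating at `0`, separated by the gaps
`G_l = (b_{l+1}, a_l]`. On `J_L` the image of `1_{G_l}` vanishes for `l < L` (the gap lies to the
right), while the image of `1_{G_L}` is `∑_ν (∫_{G_L} W_ν) φ_ν`, nonzero because `Re W_n > 0` near
`0`. This triangular structure makes the images of the `1_{G_l}` linearly independent.
-/

open MeasureTheory Set
open scoped ENNReal

theorem linearIndependent_of_triangular {ι K M : Type*} [LinearOrder ι] [DivisionRing K]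
    [AddCommGroup M] [Module K M] {f : ι → M} (S : ι → Submodule K M)
    (hlt : ∀ i j, i < j → f i ∈ S j) (hnot : ∀ j, f j ∉ S j) :
    LinearIndependent K f := by
  classical
  rw [linearIndependent_iff']
  intro s
  induction s using Finset.induction_on_max with
  | empty => simp
  | insert j s hs ih =>
    intro c hc i hi
    have hsum : ∑ i ∈ s, c i • f i ∈ S j :=
      Submodule.sum_mem _ fun i hi => Submodule.smul_mem _ _ (hlt i j (hs i hi))
    rw [Finset.sum_insert fun hj => (hs j hj).false] at hc
    have hcj : c j = 0 := by
      by_contra hcj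
      refine hnot j ((Submodule.smul_mem_iff _ hcj).1 ?_)
      rw [eq_neg_of_add_eq_zero_left hc]
      exact neg_mem hsum
    rw [hcj, zero_smul, zero_add] at hc
    rcases Finset.mem_insert.1 hi with rfl | hi
    · exact hcj
    · exact ih c hc i hi

theorem exists_seq_separated_intervals {P : ℝ → ℝ → Prop} {δ : ℝ} (hδ : 0 < δ)
    (h : ∀ e ∈ Ioc 0 δ, ∃ a b, 0 < a ∧ a < b ∧ b < e ∧ P a b) :
    ∃ a b : ℕ → ℝ, ∀ l, 0 < a l ∧ a l < b l ∧ b l < δ ∧ b (l + 1) < a l ∧ P (a l) (b l) := by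
  -- Totalised in `e`, so that `choose` yields a plain function `ℝ → ℝ × ℝ` that can be iterated.
  have h' : ∀ e : ℝ, ∃ p : ℝ × ℝ, e ∈ Ioc 0 δ → 0 < p.1 ∧ p.1 < p.2 ∧ p.2 < e ∧ P p.1 p.2 := by
    intro e
    by_cases he : e ∈ Ioc 0 δ
    · obtain ⟨a, b, hab⟩ := h e he
      exact ⟨(a, b), fun _ => hab⟩
    · exact ⟨0, fun h => absurd h he⟩
  choose p hp using h'
  let e : ℕ → ℝ := fun l => Nat.rec δ (fun _ e => (p e).1) l
  have he : ∀ l, e l ∈ Ioc 0 δ := by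
    intro l
    induction l with
    | zero => exact ⟨hδ, le_rfl⟩
    | succ l ih =>
      obtain ⟨ha, hab, hbe, -⟩ := hp _ ih
      exact ⟨ha, by linarith [ih.2]⟩
  refine ⟨fun l => (p (e l)).1, fun l => (p (e l)).2, fun l => ?_⟩
  obtain ⟨ha, hab, hbe, hP⟩ := hp _ (he l)
  exact ⟨ha, hab, hbe.trans_le (he l).2, (hp _ (he (l + 1))).2.2.1, hP⟩

theorem exists_forall_Icc_pos {g : ℝ → ℝ} {d : ℝ} (hd : 0 < d)
    (hg : ContinuousWithinAt g (Icc 0 d) 0) (h0 : 0 < g 0) :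
    ∃ δ ∈ Ioc 0 d, ∀ x ∈ Icc 0 δ, 0 < g x := by
  have hev := hg.eventually (lt_mem_nhds h0)
  rw [nhdsWithin_Icc_eq_nhdsGE hd] at hev
  obtain ⟨u, hu, hsub⟩ := mem_nhdsGE_iff_exists_Icc_subset.1 hev
  exact ⟨min u d, ⟨lt_min hu hd, min_le_right _ _⟩,
    fun x hx => hsub (Icc_subset_Icc_right (min_le_left _ _) hx)⟩

theorem setIntegral_Ioc_ne_zero_of_re_pos {f : ℝ → ℂ} {a b : ℝ} (hab : a < b)
    (hf : ContinuousOn f (Icc a b)) (hpos : ∀ x ∈ Ioo a b, 0 < (f x).re) :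
    ∫ x in Ioc a b, f x ≠ 0 := by
  intro h
  have hfi : IntervalIntegrable f volume a b := hf.intervalIntegrable_of_Icc hab.le
  have hre : 0 < ∫ x in a..b, RCLike.re (f x) := intervalIntegral.intervalIntegral_pos_of_pos_on
    ((Complex.continuous_re.comp_continuousOn hf).intervalIntegrable_of_Icc hab.le) hpos hab
  rw [intervalIntegral.intervalIntegral_re hfi, intervalIntegral.integral_of_le hab.le, h] at hre
  simp at hre

theorem mem_ker_LpToLpRestrictCLM {X F 𝕜 : Type*} [MeasurableSpace X] [NormedAddCommGroup F]
    [RCLike 𝕜] [NormedSpace 𝕜 F] {μ : Measure X} {p : ℝ≥0∞} [Fact (1 ≤ p)] {s : Set X}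
    {f : Lp F p μ} :
    f ∈ LinearMap.ker (LpToLpRestrictCLM X F 𝕜 μ p s).toLinearMap ↔ f =ᵐ[μ.restrict s] 0 := by
  rw [LinearMap.mem_ker, ContinuousLinearMap.coe_coe, Lp.eq_zero_iff_ae_eq_zero]
  have h := LpToLpRestrictCLM_coeFn 𝕜 s f
  exact ⟨h.symm.trans, h.trans⟩

/-- `φ` is linearly independent on `s` iff `vanishingCoeffs φ s = ⊥`. -/
def vanishingCoeffs {ι X 𝕜 : Type*} [Fintype ι] [CommRing 𝕜] (φ : ι → X → 𝕜) (s : Set X) :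
    Submodule 𝕜 (ι → 𝕜) where
  carrier := {A | ∀ x ∈ s, ∑ ν, A ν * φ ν x = 0}
  add_mem' {A B} hA hB x hx := by
    simp only [Pi.add_apply, add_mul, Finset.sum_add_distrib, hA x hx, hB x hx, add_zero]
  zero_mem' x _ := by simp
  smul_mem' c A hA x hx := by
    simp only [Pi.smul_apply, smul_eq_mul, mul_assoc, ← Finset.mul_sum, hA x hx, mul_zero]

theorem vanishingCoeffs_anti {ι X 𝕜 : Type*} [Fintype ι] [CommRing 𝕜] {φ : ι → X → 𝕜}
    {s t : Set X} (h : s ⊆ t) : vanishingCoeffs φ t ≤ vanishingCoeffs φ s :=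
  fun _ hA x hx => hA x (h hx)

theorem exists_vanishingCoeffs_Icc_eq_bot {ι : Type*} [Fintype ι] {φ : ι → ℝ → ℂ} {c : ℝ}
    (hc : 0 < c) (hφ : ∀ ν, ContinuousOn (φ ν) (Icc 0 c))
    (h : vanishingCoeffs φ (Icc 0 c) = ⊥) :
    ∃ a ∈ Ioo 0 c, vanishingCoeffs φ (Icc a c) = ⊥ := by
  set V := fun a => vanishingCoeffs φ (Icc a c)
  obtain ⟨_, ⟨a₀, ha₀, rfl⟩, hmin⟩ := wellFounded_lt.has_min (V '' Ioo 0 c)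
    ⟨_, mem_image_of_mem V (show c / 2 ∈ Ioo 0 c by constructor <;> linarith)⟩
  refine ⟨a₀, ha₀, eq_bot_iff.2 fun A hA => h ▸ ?_⟩
  have hIoc : ∀ x ∈ Ioc 0 c, ∑ ν, A ν * φ ν x = 0 := by
    intro x hx
    rcases le_or_gt a₀ x with hax | hxa
    · exact hA x ⟨hax, hx.2⟩
    · have hle : V x ≤ V a₀ := vanishingCoeffs_anti (Icc_subset_Icc_left hxa.le)
      have heq : V x = V a₀ :=
        hle.eq_or_lt.resolve_right (hmin _ ⟨x, ⟨hx.1, hxa.trans ha₀.2⟩, rfl⟩)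
      exact (heq ▸ hA : A ∈ V x) x ⟨le_rfl, hx.2⟩
  have hcont : ContinuousOn (fun x => ∑ ν, A ν * φ ν x) (Icc 0 c) :=
    continuousOn_finsetSum _ fun ν _ => continuousOn_const.mul (hφ ν)
  exact fun x hx => EqOn.of_subset_closure hIoc hcont continuousOn_const Ioc_subset_Icc_self
    (by rw [closure_Ioc hc.ne]) hx

theorem intervalIntegral_mul_eq_setIntegral_inter {f g : ℝ → ℂ} {d x : ℝ} {G : Set ℝ}
    (hG : MeasurableSet G) (hg : g =ᵐ[volume.restrict (Icc 0 d)] G.indicator fun _ => 1)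
    (hx : x ∈ Icc 0 d) :
    ∫ ξ in 0..x, f ξ * g ξ = ∫ ξ in Ioc 0 x ∩ G, f ξ := by
  have hg' : g =ᵐ[volume.restrict (Ioc 0 x)] G.indicator fun _ => 1 :=
    ae_restrict_of_ae_restrict_of_subset
      (Ioc_subset_Icc_self.trans (Icc_subset_Icc_right hx.2)) hg
  rw [intervalIntegral.integral_of_le hx.1, ← setIntegral_indicator hG]
  refine integral_congr_ae (hg'.mono fun ξ hξ => ?_)
  simp only [hξ, indicator, mul_ite, mul_one, mul_zero]

theorem ae_restrict_eq_sum_setIntegral_inter {ι : Type*} [Fintype ι] {φ W : ι → ℝ → ℂ}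
    {d : ℝ} {f g : ℝ → ℂ} {G J : Set ℝ}
    (hf : f =ᵐ[volume.restrict (Icc 0 d)] fun x => ∑ ν, φ ν x * ∫ ξ in (0 : ℝ)..x, W ν ξ * g ξ)
    (hG : MeasurableSet G) (hg : g =ᵐ[volume.restrict (Icc 0 d)] G.indicator fun _ => 1)
    (hJ : J ⊆ Icc 0 d) :
    f =ᵐ[volume.restrict J] fun x => ∑ ν, φ ν x * ∫ ξ in Ioc 0 x ∩ G, W ν ξ := by
  refine ae_restrict_of_ae_restrict_of_subset hJ ?_
  filter_upwards [hf, ae_restrict_mem measurableSet_Icc] with x hfx hx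
  simp only [hfx, intervalIntegral_mul_eq_setIntegral_inter hG hg hx]

theorem linearIndependent_volterra_indicator {ι : Type*} [Fintype ι] {φ W : ι → ℝ → ℂ} {d : ℝ}
    {R : Lp ℂ 2 (volume.restrict (Icc (0 : ℝ) d)) →L[ℂ] Lp ℂ 2 (volume.restrict (Icc (0 : ℝ) d))}
    (hR : ∀ g, (R g : ℝ → ℂ) =ᵐ[volume.restrict (Icc (0 : ℝ) d)]
      fun x => ∑ ν, φ ν x * ∫ ξ in (0 : ℝ)..x, W ν ξ * g ξ)
    (hφ : ∀ ν, ContinuousOn (φ ν) (Icc 0 d))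
    {a b : ℕ → ℝ} (ha : ∀ l, 0 ≤ a l) (hab : ∀ l, a l < b l) (hba : ∀ l, b (l + 1) < a l)
    (hbd : b 0 ≤ d) (hind : ∀ l, vanishingCoeffs φ (Icc (a l) (b l)) = ⊥)
    (hW : ∀ l, (fun ν => ∫ ξ in Ioc (b (l + 1)) (a l), W ν ξ) ≠ 0)
    {g : ℕ → Lp ℂ 2 (volume.restrict (Icc (0 : ℝ) d))}
    (hg : ∀ l, (g l : ℝ → ℂ) =ᵐ[volume.restrict (Icc 0 d)]
      (Ioc (b (l + 1)) (a l)).indicator fun _ => 1) :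
    LinearIndependent ℂ fun l => R (g l) := by
  have hb : StrictAnti b := strictAnti_nat_of_succ_lt fun l => (hba l).trans (hab l)
  have hJ : ∀ l, Icc (a l) (b l) ⊆ Icc 0 d := fun l =>
    Icc_subset_Icc (ha l) ((hb.antitone (Nat.zero_le l)).trans hbd)
  have hf : ∀ l L, (R (g l) : ℝ → ℂ) =ᵐ[volume.restrict (Icc (a L) (b L))]
      fun x => ∑ ν, φ ν x * ∫ ξ in Ioc 0 x ∩ Ioc (b (l + 1)) (a l), W ν ξ :=
    fun l L => ae_restrict_eq_sum_setIntegral_inter (hR (g l)) measurableSet_Ioc (hg l) (hJ L)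
  refine linearIndependent_of_triangular
    (fun L => LinearMap.ker (LpToLpRestrictCLM ℝ ℂ ℂ _ 2 (Icc (a L) (b L))).toLinearMap)
    (fun l L hlt => ?_) (fun L hL => ?_)
  · rw [mem_ker_LpToLpRestrictCLM, Measure.restrict_restrict_of_subset (hJ L)]
    filter_upwards [hf l L, ae_restrict_mem measurableSet_Icc] with x hx hxJ
    have : Ioc 0 x ∩ Ioc (b (l + 1)) (a l) = ∅ := eq_empty_of_forall_notMem fun ξ hξ => by
      have := hb.antitone (Nat.succ_le_of_lt hlt)
      linarith [hξ.1.2, hξ.2.1, hxJ.2]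
    simp [hx, this]
  · rw [mem_ker_LpToLpRestrictCLM, Measure.restrict_restrict_of_subset (hJ L)] at hL
    apply hW L
    rw [← Submodule.mem_bot ℂ, ← hind L]
    have hzero : (fun x => ∑ ν, (∫ ξ in Ioc (b (L + 1)) (a L), W ν ξ) * φ ν x)
        =ᵐ[volume.restrict (Icc (a L) (b L))] 0 := by
      filter_upwards [hL, hf L L, ae_restrict_mem measurableSet_Icc] with x h0 hx hxJ
      have : Ioc 0 x ∩ Ioc (b (L + 1)) (a L) = Ioc (b (L + 1)) (a L) :=
        inter_eq_right.2 fun ξ hξ =>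
          ⟨(ha (L + 1)).trans_lt ((hab _).trans hξ.1), hξ.2.trans hxJ.1⟩
      rw [← h0, hx, this]
      simp [mul_comm]
    exact Measure.eqOn_Icc_of_ae_eq volume (hab L).ne hzero (continuousOn_finsetSum _ fun ν _ =>
      continuousOn_const.mul ((hφ ν).mono (hJ L))) continuousOn_const

/-- Let `φ_ν, W_ν` (`ν = 1, …, n+1`) be continuous on `[0, d]`
with `W_{n+1}(0) = 1` and `φ_1, …, φ_{n+1}` linearly independent on `[0, d₁]` for
every `0 < d₁ ≤ d`. Then the Volterra-type operator
`(R g)(x) = Σ_ν φ_ν(x) ∫₀ˣ W_ν(ξ) g(ξ) dξ` on `L²[0, d]` has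
infinite-dimensional range. -/
theorem volterra_operator_infinite_rank
    (n : ℕ) (d : ℝ) (hd : 0 < d)
    (φ W : Fin (n + 1) → ℝ → ℂ)
    (hφ : ∀ ν, ContinuousOn (φ ν) (Set.Icc 0 d))
    (hW : ∀ ν, ContinuousOn (W ν) (Set.Icc 0 d))
    (hWn : W (Fin.last n) 0 = 1)
    (hind : ∀ d₁ : ℝ, 0 < d₁ → d₁ ≤ d →
      ∀ A : Fin (n + 1) → ℂ,
        (∀ x ∈ Set.Icc (0 : ℝ) d₁, ∑ ν, A ν * φ ν x = 0) → ∀ ν, A ν = 0)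
    (R : Lp ℂ 2 (volume.restrict (Set.Icc (0 : ℝ) d)) →L[ℂ]
      Lp ℂ 2 (volume.restrict (Set.Icc (0 : ℝ) d)))
    (hR : ∀ g, (R g : ℝ → ℂ) =ᵐ[volume.restrict (Set.Icc (0 : ℝ) d)]
      fun x => ∑ ν, φ ν x * ∫ ξ in (0 : ℝ)..x, W ν ξ * g ξ) :
    ¬ ∃ F : Submodule ℂ (Lp ℂ 2 (volume.restrict (Set.Icc (0 : ℝ) d))),
        FiniteDimensional ℂ F ∧
          LinearMap.range (R : Lp ℂ 2 (volume.restrict (Set.Icc (0 : ℝ) d)) →ₗ[ℂ]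
            Lp ℂ 2 (volume.restrict (Set.Icc (0 : ℝ) d))) ≤ F := by
  rintro ⟨F, hF, hle⟩
  obtain ⟨δ, ⟨hδ, hδd⟩, hWpos⟩ := exists_forall_Icc_pos hd
    (Complex.continuous_re.continuousAt.comp_continuousWithinAt
      (hW (Fin.last n) 0 ⟨le_rfl, hd.le⟩)) (by simp [hWn])
  have hsmall : ∀ e ∈ Ioc 0 δ,
      ∃ a b, 0 < a ∧ a < b ∧ b < e ∧ vanishingCoeffs φ (Icc a b) = ⊥ := by
    rintro e ⟨he, heδ⟩
    obtain ⟨a, ha, hbot⟩ := exists_vanishingCoeffs_Icc_eq_bot (half_pos he)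
      (fun ν => (hφ ν).mono (Icc_subset_Icc_right (by linarith)))
      ((Submodule.eq_bot_iff _).2 fun A hA => funext (hind _ (half_pos he) (by linarith) A hA))
    exact ⟨a, e / 2, ha.1, ha.2, half_lt_self he, hbot⟩
  obtain ⟨a, b, hseq⟩ := exists_seq_separated_intervals hδ hsmall
  have hWgap : ∀ l, (fun ν => ∫ ξ in Ioc (b (l + 1)) (a l), W ν ξ) ≠ 0 := fun l h => by
    obtain ⟨ha', hab', -, -, -⟩ := hseq (l + 1)
    obtain ⟨-, hab, hbδ, hba, -⟩ := hseq l
    refine setIntegral_Ioc_ne_zero_of_re_pos hba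
      ((hW _).mono (Icc_subset_Icc (by linarith) (by linarith)))
      (fun x hx => hWpos x ⟨by linarith [hx.1], by linarith [hx.2]⟩) (congr_fun h (Fin.last n))
  let g l : Lp ℂ 2 (volume.restrict (Icc (0 : ℝ) d)) :=
    indicatorConstLp 2 measurableSet_Ioc (measure_ne_top _ (Ioc (b (l + 1)) (a l))) (1 : ℂ)
  have hli : LinearIndependent ℂ fun l => R (g l) :=
    linearIndependent_volterra_indicator hR hφ (fun l => (hseq l).1.le) (fun l => (hseq l).2.1)
      (fun l => (hseq l).2.2.2.1) ((hseq 0).2.2.1.le.trans hδd) (fun l => (hseq l).2.2.2.2) hWgap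
      (fun l => indicatorConstLp_coeFn)
  have : FiniteDimensional ℂ F := hF
  exact Module.Finite.not_linearIndependent_of_infinite (fun l => (⟨R (g l), hle ⟨g l, rfl⟩⟩ : F))
    (.of_comp F.subtype hli)
end
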